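/- arXiv:2408.03504 — 6 statements merged into one kernel-verified Lean document; each statement's English description precedes it below -/
import Mathlib

section
/- Over any field F, every k-partite 1-tree G with N vertices satisfies rank_F(I_G) = N - (k-1), where I_G is the incidence matrix of G. -/
/-!
Induct along the construction of the tree. A single hyperedge on `k` vertices has an all-ones
column as incidence matrix, of rank `min 1 k`. A degree-one extension adds a vertex lying
only in the new hyperedge, so its row is the standard basis vector of the new column; adding such
a row and column raises the rank by exactly one, because the kernel of the larger matrix is the
kernel of the smaller one extended by zero.
-/

/-- A k-partite 1-tree: built from K_1^k (a single hyperedge on k vertices)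
by a sequence of degree-one extensions. -/
inductive IsOneTree (k : ℕ) {α : Type*} [DecidableEq α] :
    Finset α → Finset (Finset α) → Prop
  | base (V : Finset α) (hV : V.card = k) : IsOneTree k V {V}
  | extend (V : Finset α) (E : Finset (Finset α)) (h : IsOneTree k V E)
      (v : α) (hv : v ∉ V) (s : Finset α) (hs : s ⊆ V) (hcard : s.card = k - 1) :
      IsOneTree k (insert v V) (insert (insert v s) E)

section Rank

variable {F : Type*} [Field F] {m n : Type*}

def extendNoneZero : (n → F) →ₗ[F] Option n → F :=
  LinearMap.pi fun o => o.elim 0 LinearMap.proj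

@[simp] lemma extendNoneZero_none (y : n → F) : extendNoneZero y none = 0 := rfl

@[simp] lemma extendNoneZero_some (y : n → F) (j : n) : extendNoneZero y (some j) = y j := rfl

@[simp] lemma extendNoneZero_comp_some (y : n → F) : extendNoneZero y ∘ some = y := rfl

lemma extendNoneZero_injective : Function.Injective (extendNoneZero : (n → F) → Option n → F) :=
  fun _ _ h => funext fun j => congrFun h (some j)

namespace Matrix

variable [Fintype n]

theorem rank_eq_zero_iff [DecidableEq n] {A : Matrix m n F} : A.rank = 0 ↔ A = 0 := by
  rw [rank, Submodule.finrank_eq_zero, LinearMap.range_eq_bot, ← toLin'_apply',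
    LinearEquiv.map_eq_zero_iff]

lemma mulVec_some (M : Matrix (Option m) (Option n) F) (x : Option n → F) (i : m) :
    (M *ᵥ x) (some i) = M (some i) none * x none + (M.submatrix some some *ᵥ (x ∘ some)) i := by
  simp only [mulVec, dotProduct, Fintype.sum_option, submatrix_apply, Function.comp_apply]

lemma ker_mulVecLin_eq_map_extendNoneZero [DecidableEq n] (M : Matrix (Option m) (Option n) F)
    (hM : M none = Pi.single none 1) :
    LinearMap.ker M.mulVecLin =
      (LinearMap.ker (M.submatrix some some).mulVecLin).map extendNoneZero := by
  have hnone (x : Option n → F) : (M *ᵥ x) none = x none := by simp [mulVec, hM]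
  ext x
  simp only [LinearMap.mem_ker, mulVecLin_apply, Submodule.mem_map]
  constructor
  · intro hx
    have hx0 : x none = 0 := by rw [← hnone x, hx, Pi.zero_apply]
    refine ⟨x ∘ some, funext fun i => ?_, funext fun o => ?_⟩
    · simpa [mulVec_some, hx0] using congrFun hx (some i)
    · cases o <;> simp [hx0]
  · rintro ⟨y, hy, rfl⟩
    funext o
    cases o with
    | none => simp [hnone]
    | some i => simpa [mulVec_some] using congrFun hy i

theorem rank_eq_rank_submatrix_some_add_one [DecidableEq n]
    (M : Matrix (Option m) (Option n) F) (hM : M none = Pi.single none 1) :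
    M.rank = (M.submatrix some some).rank + 1 := by
  have hker : Module.finrank F (LinearMap.ker M.mulVecLin) =
      Module.finrank F (LinearMap.ker (M.submatrix some some).mulVecLin) := by
    rw [ker_mulVecLin_eq_map_extendNoneZero M hM]
    exact (Submodule.equivMapOfInjective _ extendNoneZero_injective _).finrank_eq.symm
  have hnullityM := M.mulVecLin.finrank_range_add_finrank_ker
  have hnullityA := (M.submatrix some some).mulVecLin.finrank_range_add_finrank_ker
  simp only [Module.finrank_fintype_fun_eq_card, Fintype.card_option] at hnullityM hnullityA
  rw [rank, rank]
  omega

end Matrix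

end Rank

section Incidence

variable {α : Type*} [DecidableEq α]

def incidenceMatrix (F : Type*) [Zero F] [One F] (V : Finset α) (E : Finset (Finset α)) :
    Matrix V E F :=
  Matrix.of fun v e => if (v : α) ∈ (e : Finset α) then 1 else 0

theorem rank_incidenceMatrix_singleton (F : Type*) [Field F] (V : Finset α) :
    (incidenceMatrix F V {V}).rank = min 1 V.card := by
  rcases V.eq_empty_or_nonempty with rfl | ⟨x, hx⟩
  · simpa using (incidenceMatrix F ∅ {∅}).rank_le_card_height
  · have hle := (incidenceMatrix F V {V}).rank_le_card_width
    have hne : (incidenceMatrix F V {V}).rank ≠ 0 := by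
      intro h0
      have h := congr_fun₂ (Matrix.rank_eq_zero_iff.mp h0) ⟨x, hx⟩ ⟨V, Finset.mem_singleton_self V⟩
      exact one_ne_zero ((if_pos hx).symm.trans h)
    simp only [Fintype.card_coe, Finset.card_singleton] at hle
    have := Finset.card_pos.mpr ⟨x, hx⟩
    omega

theorem rank_incidenceMatrix_insert_insert (F : Type*) [Field F] {V : Finset α}
    {E : Finset (Finset α)} {v : α} {e : Finset α} (hv : v ∉ V) (hvE : ∀ f ∈ E, v ∉ f)
    (hve : v ∈ e) :
    (incidenceMatrix F (insert v V) (insert e E)).rank = (incidenceMatrix F V E).rank + 1 := by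
  have heE : e ∉ E := fun he => hvE e he hve
  let eV := Finset.subtypeInsertEquivOption hv
  let eE := Finset.subtypeInsertEquivOption heE
  let M := (incidenceMatrix F (insert v V) (insert e E)).submatrix eV.symm eE.symm
  have hrow : M none = Pi.single none 1 := by
    funext o
    cases o with
    | none => rw [Pi.single_eq_same]; exact if_pos hve
    | some f => rw [Pi.single_eq_of_ne (Option.some_ne_none f)]; exact if_neg (hvE f f.2)
  have hsub : M.submatrix some some = incidenceMatrix F V E := rfl
  rw [← Matrix.rank_submatrix _ eV.symm eE.symm,
    Matrix.rank_eq_rank_submatrix_some_add_one M hrow, hsub]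

namespace IsOneTree

variable {k : ℕ} {V : Finset α} {E : Finset (Finset α)}

theorem subset_of_mem (h : IsOneTree k V E) {e : Finset α} (he : e ∈ E) : e ⊆ V := by
  induction h with
  | base => rw [Finset.mem_singleton.mp he]
  | extend V _ _ v _ s hs _ ih =>
    rcases Finset.mem_insert.mp he with rfl | he
    · exact Finset.insert_subset_insert v hs
    · exact (ih he).trans (Finset.subset_insert v V)

theorem le_card (h : IsOneTree k V E) : k ≤ V.card := by
  induction h with
  | base _ hV => exact hV.ge
  | extend _ _ _ _ hv _ _ _ ih => rw [Finset.card_insert_of_notMem hv]; omega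

end IsOneTree

end Incidence

/-- Over any field F, every k-partite 1-tree G with N vertices satisfies
rank_F(I_G) = N - (k-1), where I_G is the incidence matrix. -/
theorem stmt_3 {α : Type*} [DecidableEq α] (F : Type*) [Field F] (k : ℕ)
    (V : Finset α) (E : Finset (Finset α)) (h : IsOneTree k V E) :
    (Matrix.of fun (v : ↥V) (e : ↥E) =>
        if (v : α) ∈ (e : Finset α) then (1 : F) else 0).rank
      = V.card - (k - 1) := by
  change (incidenceMatrix F V E).rank = V.card - (k - 1)
  induction h with
  | base V hV => rw [rank_incidenceMatrix_singleton, hV]; omega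
  | extend V E hT v hv s _ _ ih =>
    have hvE (f : Finset α) (hf : f ∈ E) : v ∉ f := fun hvf => hv (hT.subset_of_mem hf hvf)
    rw [rank_incidenceMatrix_insert_insert F hv hvE (Finset.mem_insert_self v s), ih,
      Finset.card_insert_of_notMem hv]
    have := hT.le_card
    omega
end

section
/- Let G be a k-partite k-uniform hypergraph on N vertices with vertex classes V_1,...,V_k, and let p = (p_1,...,p_N) ∈ ℝ^N be generic (the entries are algebraically independent over ℚ). Then the 1-dimensional framework (G,p) is globally rigid if and only if rank_ℝ(I_G) = rank_{GF(2)}(I_G) = N - (k-1). -/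
/-!
Since `p` has no zero entries, a configuration `q` with the same edge products is `q = r * p` for
a labelling `r : V → ℝˣ` whose product over every edge is `1` (every vertex lies on an edge, for
otherwise its label would be unconstrained). Global rigidity says exactly that all such
labellings are trivial, i.e. of the form `a ∘ part` with `∏ a = 1`. This condition makes sense
for any abelian group, is invariant under isomorphism and splits over products; over a field `F`
the trivial labellings form a `(k - 1)`-dimensional subspace of the left kernel of `I_G`, so the
condition says `rank_F I_G = N - (k - 1)`. The theorem follows from `ℝˣ ≅ ℝ × ℤ/2`,
`u ↦ (log |u|, sign u)`.
-/

open Finset Matrix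

section BalancedLabels

variable {V E A B : Type*} {k : ℕ} {part : V → Fin k} {edge : E → Finset V}

def BalancedLabelsAreTrivial (A : Type*) [AddCommGroup A] (part : V → Fin k)
    (edge : E → Finset V) : Prop :=
  ∀ x : V → A, (∀ e, ∑ v ∈ edge e, x v = 0) →
    ∃ c : Fin k → A, ∑ i, c i = 0 ∧ ∀ v, x v = c (part v)

variable [AddCommGroup A] [AddCommGroup B]

theorem BalancedLabelsAreTrivial.of_injective (hpart : Function.Surjective part)
    (h : BalancedLabelsAreTrivial B part edge) (f : A →+ B) (hf : Function.Injective f) :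
    BalancedLabelsAreTrivial A part edge := by
  intro x hx
  obtain ⟨c, hc, hxc⟩ := h (f ∘ x) fun e => by simp [← map_sum, hx e]
  choose s hs using hpart
  have hfx : ∀ i, f (x (s i)) = c i := fun i => by rw [← hs i, ← hxc, hs]; rfl
  refine ⟨fun i => x (s i), hf ?_, fun v => hf ?_⟩
  · simp only [map_sum, hfx, hc, map_zero]
  · rw [hfx]; exact hxc v

theorem BalancedLabelsAreTrivial.prod (hA : BalancedLabelsAreTrivial A part edge)
    (hB : BalancedLabelsAreTrivial B part edge) : BalancedLabelsAreTrivial (A × B) part edge := by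
  intro x hx
  obtain ⟨a, ha, hxa⟩ := hA (fun v => (x v).1) fun e => by
    rw [← Prod.fst_sum, hx e, Prod.fst_zero]
  obtain ⟨b, hb, hxb⟩ := hB (fun v => (x v).2) fun e => by
    rw [← Prod.snd_sum, hx e, Prod.snd_zero]
  refine ⟨fun i => (a i, b i), Prod.ext ?_ ?_, fun v => Prod.ext (hxa v) (hxb v)⟩
  · rw [Prod.fst_sum]; exact ha
  · rw [Prod.snd_sum]; exact hb

theorem balancedLabelsAreTrivial_prod_iff (hpart : Function.Surjective part) :
    BalancedLabelsAreTrivial (A × B) part edge ↔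
      BalancedLabelsAreTrivial A part edge ∧ BalancedLabelsAreTrivial B part edge :=
  ⟨fun h => ⟨h.of_injective hpart (.inl A B) fun _ _ h => congrArg Prod.fst h,
    h.of_injective hpart (.inr A B) fun _ _ h => congrArg Prod.snd h⟩, fun h => h.1.prod h.2⟩

theorem balancedLabelsAreTrivial_congr (hpart : Function.Surjective part) (φ : A ≃+ B) :
    BalancedLabelsAreTrivial A part edge ↔ BalancedLabelsAreTrivial B part edge :=
  ⟨fun h => h.of_injective hpart φ.symm.toAddMonoidHom φ.symm.injective,
    fun h => h.of_injective hpart φ.toAddMonoidHom φ.injective⟩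

theorem BalancedLabelsAreTrivial.exists_mem_edge [Nontrivial A] (hpart : Function.Surjective part)
    (h : BalancedLabelsAreTrivial A part edge) (v : V) : ∃ e, v ∈ edge e := by
  classical
  by_contra! hv
  obtain ⟨a, ha⟩ := exists_ne (0 : A)
  obtain ⟨c, hc, hxc⟩ := h (Pi.single v a) fun e =>
    sum_eq_zero fun w hw => Pi.single_eq_of_ne (ne_of_mem_of_not_mem hw (hv e)) _
  have hc0 : ∀ i ≠ part v, c i = 0 := by
    intro i hi
    obtain ⟨w, rfl⟩ := hpart i
    rw [← hxc, Pi.single_eq_of_ne (fun hwv => hi (congrArg part hwv))]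
  rw [sum_eq_single (part v) (fun i _ hi => hc0 i hi) (by simp), ← hxc, Pi.single_eq_same] at hc
  exact ha hc

theorem sum_comp_eq_sum_of_existsUnique {M : Type*} [AddCommMonoid M] {s : Finset V}
    (hs : ∀ i, ∃! v, v ∈ s ∧ part v = i) (c : Fin k → M) :
    ∑ v ∈ s, c (part v) = ∑ i, c i :=
  sum_bij (fun v _ => part v) (fun _ _ => mem_univ _)
    (fun _ hv _ hw h => (hs _).unique ⟨hv, rfl⟩ ⟨hw, h.symm⟩)
    (fun i _ => let ⟨v, hv, hvi⟩ := (hs i).exists; ⟨v, hv, hvi⟩) (fun _ _ => rfl)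

variable (F : Type*) [Field F]

def trivialLabels (part : V → Fin k) : Submodule F (V → F) :=
  (LinearMap.ker (∑ i, LinearMap.proj i : (Fin k → F) →ₗ[F] F)).map (LinearMap.funLeft F F part)

theorem mem_trivialLabels {x : V → F} :
    x ∈ trivialLabels F part ↔ ∃ c : Fin k → F, ∑ i, c i = 0 ∧ ∀ v, x v = c (part v) := by
  simp [trivialLabels, funext_iff, eq_comm]

theorem finrank_trivialLabels (hpart : Function.Surjective part) :
    Module.finrank F (trivialLabels F part) = k - 1 := by
  rw [trivialLabels, ← (Submodule.equivMapOfInjective _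
    (LinearMap.funLeft_injective_of_surjective F F part hpart) _).finrank_eq]
  rcases k with _ | k
  · exact Module.finrank_zero_of_subsingleton
  · have hsum : (∑ i, LinearMap.proj i : (Fin (k + 1) → F) →ₗ[F] F) ≠ 0 := fun h => by
      simpa using LinearMap.congr_fun h (Pi.single 0 1)
    have := Module.Dual.finrank_ker_add_one_of_ne_zero hsum
    simp only [Module.finrank_fin_fun] at this
    omega

theorem vecMul_incidence [DecidableEq V] [Fintype V] (x : V → F) (e : E) :
    (x ᵥ* Matrix.of fun v e => if v ∈ edge e then (1 : F) else 0) e = ∑ v ∈ edge e, x v := by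
  simp [vecMul, dotProduct]

theorem rank_incidence_eq_iff [DecidableEq V] [Fintype V] [Fintype E]
    (hpart : Function.Surjective part) (huniform : ∀ e i, ∃! v, v ∈ edge e ∧ part v = i) :
    (Matrix.of fun v e => if v ∈ edge e then (1 : F) else 0).rank = Fintype.card V - (k - 1) ↔
      BalancedLabelsAreTrivial F part edge := by
  set M : Matrix V E F := Matrix.of fun v e => if v ∈ edge e then 1 else 0
  have mem_ker : ∀ x, x ∈ LinearMap.ker M.vecMulLinear ↔ ∀ e, ∑ v ∈ edge e, x v = 0 := fun x => by
    simp only [LinearMap.mem_ker, vecMulLinear_apply, funext_iff, M, vecMul_incidence,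
      Pi.zero_apply]
  have rank_add_finrank_ker : M.rank + Module.finrank F (LinearMap.ker M.vecMulLinear) =
      Fintype.card V := by
    rw [← Matrix.rank_transpose, Matrix.rank, Matrix.mulVecLin_transpose,
      LinearMap.finrank_range_add_finrank_ker, Module.finrank_fintype_fun_eq_card]
  have trivial_le_ker : trivialLabels F part ≤ LinearMap.ker M.vecMulLinear := fun x hx => by
    obtain ⟨c, hc, hxc⟩ := (mem_trivialLabels F).1 hx
    refine (mem_ker x).2 fun e => ?_
    rw [sum_congr rfl fun v _ => hxc v, sum_comp_eq_sum_of_existsUnique (huniform e), hc]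
  have hk : k ≤ Fintype.card V := by simpa using Fintype.card_le_of_surjective part hpart
  have hdim := finrank_trivialLabels F hpart
  calc M.rank = Fintype.card V - (k - 1)
      ↔ Module.finrank F (LinearMap.ker M.vecMulLinear) = k - 1 := by omega
    _ ↔ LinearMap.ker M.vecMulLinear ≤ trivialLabels F part :=
      ⟨fun h => (Submodule.eq_of_le_of_finrank_eq trivial_le_ker (hdim.trans h.symm)).ge,
        fun h => le_antisymm h trivial_le_ker ▸ hdim⟩
    _ ↔ BalancedLabelsAreTrivial F part edge := by
      simp only [SetLike.le_def, mem_ker, mem_trivialLabels, BalancedLabelsAreTrivial]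

end BalancedLabels

noncomputable def Real.unitsAddEquiv : Additive ℝˣ ≃+ ℝ × ZMod 2 where
  toFun u := (Real.log |(u.toMul : ℝ)|, if 0 < (u.toMul : ℝ) then 0 else 1)
  invFun t := .ofMul (Units.mk0 ((if t.2 = 0 then 1 else -1) * Real.exp t.1)
    (mul_ne_zero (by split_ifs <;> norm_num) (Real.exp_pos _).ne'))
  left_inv u := by
    apply Additive.toMul.injective
    ext
    rcases u.toMul.ne_zero.lt_or_gt with h | h
    · simp [h.not_gt, Real.exp_log_of_neg h]
    · simp [h, Real.exp_log h]
  right_inv t := by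
    obtain ⟨t, s⟩ := t
    obtain rfl | rfl : s = 0 ∨ s = 1 := by revert s; decide
    all_goals simp [Real.exp_pos, Real.exp_nonneg]
  map_add' u w := by
    have hu := u.toMul.ne_zero
    have hw := w.toMul.ne_zero
    ext
    · simp [Real.log_mul, hu, hw]
    · have h11 : (1 : ZMod 2) + 1 = 0 := rfl
      rcases hu.lt_or_gt with hu | hu <;> rcases hw.lt_or_gt with hw | hw <;>
        simp [hu, hw, hu.not_gt, hw.not_gt, mul_pos_iff, h11]

theorem globallyRigid_iff_balancedLabelsAreTrivial {V E : Type*} {k : ℕ} {part : V → Fin k}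
    (hpart : Function.Surjective part) (edge : E → Finset V) {p : V → ℝ} (hp : ∀ v, p v ≠ 0) :
    (∀ q : V → ℝ, (∀ e, ∏ v ∈ edge e, q v = ∏ v ∈ edge e, p v) →
        ∃ a : Fin k → ℝ, (∏ i, a i) = 1 ∧ ∀ v, q v = a (part v) * p v) ↔
      BalancedLabelsAreTrivial (Additive ℝˣ) part edge := by
  have hpe : ∀ e, ∏ v ∈ edge e, p v ≠ 0 := fun e => prod_ne_zero_iff.2 fun v _ => hp v
  constructor
  · intro hrigid x hx
    obtain ⟨a, ha, hqa⟩ := hrigid (fun v => (x v).toMul * p v) fun e => by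
      rw [prod_mul_distrib, ← Units.coe_prod, ← toMul_sum, hx e, toMul_zero, Units.val_one,
        one_mul]
    have ha0 : ∀ i, a i ≠ 0 := fun i => prod_ne_zero_iff.1 (ha ▸ one_ne_zero) i (mem_univ i)
    refine ⟨fun i => .ofMul (Units.mk0 (a i) (ha0 i)), ?_, fun v => ?_⟩
    · apply Additive.toMul.injective
      ext
      simp [ha]
    · apply Additive.toMul.injective
      ext
      exact mul_right_cancel₀ (hp v) (hqa v)
  · intro h q hq
    have : Nontrivial (Additive ℝˣ) := Real.unitsAddEquiv.toEquiv.nontrivial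
    have hq0 : ∀ v, q v ≠ 0 := fun v h0 => by
      obtain ⟨e, he⟩ := h.exists_mem_edge hpart v
      exact hpe e (hq e ▸ prod_eq_zero he h0)
    obtain ⟨c, hc, hrc⟩ :=
      h (fun v => .ofMul (Units.mk0 (q v / p v) (div_ne_zero (hq0 v) (hp v)))) fun e => by
        apply Additive.toMul.injective
        ext
        simp [prod_div_distrib, hq e, hpe e]
    refine ⟨fun i => ((c i).toMul : ℝ), ?_, fun v => ?_⟩
    · rw [← Units.coe_prod, ← toMul_sum, hc, toMul_zero, Units.val_one]
    · show q v = ((c (part v)).toMul : ℝ) * p v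
      rw [← hrc v]
      simp [hp v]

/-- For a k-partite k-uniform hypergraph G on N vertices and a generic
configuration p ∈ ℝ^N (entries algebraically independent over ℚ), the 1-dimensional
framework (G,p) is globally rigid (every q with the same rigidity-map image is
congruent to p) if and only if rank_ℝ(I_G) = rank_{GF(2)}(I_G) = N - (k-1). -/
theorem stmt_5 {k : ℕ} (V E : Type*) [Fintype V] [Fintype E] [DecidableEq V]
    (part : V → Fin k) (hpart : Function.Surjective part)
    (edge : E → Finset V)
    (huniform : ∀ (e : E) (i : Fin k), ∃! v, v ∈ edge e ∧ part v = i)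
    (p : V → ℝ) (hp : AlgebraicIndependent ℚ p) :
    (∀ q : V → ℝ, (∀ e, ∏ v ∈ edge e, q v = ∏ v ∈ edge e, p v) →
        ∃ a : Fin k → ℝ, (∏ i, a i) = 1 ∧ ∀ v, q v = a (part v) * p v)
      ↔ ((Matrix.of fun (v : V) (e : E) => if v ∈ edge e then (1 : ℝ) else 0).rank
            = Fintype.card V - (k - 1)
          ∧ (Matrix.of fun (v : V) (e : E) => if v ∈ edge e then (1 : ZMod 2) else 0).rank
            = Fintype.card V - (k - 1)) := by
  rw [globallyRigid_iff_balancedLabelsAreTrivial hpart edge hp.ne_zero,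
    balancedLabelsAreTrivial_congr hpart Real.unitsAddEquiv,
    balancedLabelsAreTrivial_prod_iff hpart, rank_incidence_eq_iff ℝ hpart huniform,
    rank_incidence_eq_iff (ZMod 2) hpart huniform]
end

section
/- Let G be a k-partite k-uniform hypergraph on N vertices with vertex classes V_1,...,V_k, let p ∈ (F^d)^N be any point configuration, and let ω: E(G) → F be in the left kernel of the Jacobian Jf_G^d(p) of the d-dimensional rigidity map. Then for each j ∈ {1,...,k}, the vector y_j ∈ F^N defined by (y_j)_v = p_{v,1} for v ∈ V_j and 0 otherwise lies in the kernel of the first coordinated adjacency matrix A_ω^1. In particular, dim(∩_ω ker A_ω^1) ≥ k when the y_j are linearly independent. -/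
/-!
Fix an edge `e ∋ u`. In row `u` of `A_ω^1 y_j`, the edge `e` contributes `ω e ∏_{v ∈ e ∖ {u, w}} p_{v,1} · p_{w,1}`
for each `w ∈ e ∖ {u}` in the class `V_j`; each such term equals `ω e ∏_{v ∈ e ∖ {u}} p_{v,1}`, and since `e` meets
`V_j` exactly once there is one such `w` if `u ∉ V_j` and none if `u ∈ V_j`. Hence `(A_ω^1 y_j)_u` is either `0` or
the left-kernel equation of `ω` at `u` in the first coordinate.
-/

open Finset Matrix

theorem Finset.card_filter_erase_of_card_filter_eq_one {V : Type*} [DecidableEq V]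
    {s : Finset V} {P : V → Prop} [DecidablePred P] (hs : #(s.filter P) = 1) {u : V}
    (hu : u ∈ s) : #((s.erase u).filter P) = if P u then 0 else 1 := by
  rw [filter_erase]
  split_ifs with hPu
  · rw [card_erase_of_mem (mem_filter.mpr ⟨hu, hPu⟩), hs]
  · rw [erase_eq_of_notMem fun h => hPu (mem_filter.mp h).2, hs]

theorem Finset.sum_prod_erase_mul_ite {V R : Type*} [DecidableEq V] [CommSemiring R]
    (s : Finset V) (P : V → Prop) [DecidablePred P] (f : V → R) :
    ∑ w ∈ s, (∏ v ∈ s.erase w, f v) * (if P w then f w else 0) =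
      #(s.filter P) • ∏ v ∈ s, f v := by
  rw [card_eq_sum_ones, sum_smul, sum_filter]
  refine sum_congr rfl fun w hw => ?_
  split_ifs
  · rw [prod_erase_mul s f hw, one_smul]
  · rw [mul_zero]

section CoordAdjMatrix

variable {V E F : Type*} [Fintype E] [DecidableEq V] [CommSemiring F]

/-- The paper's `A_ω^1` is `coordAdjMatrix edge (fun v => p_{v,1}) ω`. -/
def coordAdjMatrix (edge : E → Finset V) (q : V → F) (ω : E → F) : Matrix V V F :=
  fun u w => if u = w then 0 else
    ∑ e ∈ univ.filter (fun e => u ∈ edge e ∧ w ∈ edge e), ω e * ∏ v ∈ ((edge e).erase u).erase w, q v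

variable [Fintype V]

theorem mulVec_coordAdjMatrix (edge : E → Finset V) (q : V → F) (ω : E → F) (x : V → F) (u : V) :
    (coordAdjMatrix edge q ω *ᵥ x) u =
      ∑ e ∈ univ.filter (u ∈ edge ·),
        ω e * ∑ w ∈ (edge e).erase u, (∏ v ∈ ((edge e).erase u).erase w, q v) * x w := by
  have hterm : ∀ w, coordAdjMatrix edge q ω u w * x w = ∑ e ∈ univ.filter (u ∈ edge ·),
      if w ∈ (edge e).erase u then ω e * ((∏ v ∈ ((edge e).erase u).erase w, q v) * x w)
      else 0 := by
    intro w
    rw [coordAdjMatrix, sum_filter, sum_filter]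
    split_ifs with huw
    · subst huw; simp
    · rw [sum_mul]
      refine sum_congr rfl fun e _ => ?_
      by_cases hu : u ∈ edge e <;> by_cases hw : w ∈ edge e <;>
        simp [hu, hw, Ne.symm huw, mul_assoc]
  simp only [mulVec, dotProduct, hterm, mul_sum]
  rw [sum_comm]
  exact sum_congr rfl fun e _ => by rw [sum_ite_mem, univ_inter]

theorem coordAdjMatrix_mulVec_ite_eq_zero {ι : Type*} [DecidableEq ι] (edge : E → Finset V) (q : V → F)
    (ω : E → F) (part : V → ι) (j : ι) (hpart : ∀ e, #((edge e).filter (part · = j)) = 1)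
    (hω : ∀ u, ∑ e ∈ univ.filter (u ∈ edge ·), ω e * ∏ w ∈ (edge e).erase u, q w = 0) :
    coordAdjMatrix edge q ω *ᵥ (fun v => if part v = j then q v else 0) = 0 := by
  funext u
  have hrow : ∀ e ∈ univ.filter (u ∈ edge ·),
      ∑ w ∈ (edge e).erase u, (∏ v ∈ ((edge e).erase u).erase w, q v) *
        (if part w = j then q w else 0) =
      (if part u = j then 0 else 1) • ∏ v ∈ (edge e).erase u, q v := fun e he => by
    rw [sum_prod_erase_mul_ite,
      card_filter_erase_of_card_filter_eq_one (hpart e) (mem_filter.mp he).2]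
  rw [mulVec_coordAdjMatrix, sum_congr rfl fun e he => by rw [hrow e he]]
  split_ifs
  · simp
  · simpa using hω u

end CoordAdjMatrix

theorem LinearIndependent.card_le_finrank_of_forall_mem {K M : Type*} [Field K] [AddCommGroup M]
    [Module K M] [FiniteDimensional K M] {n : ℕ} {y : Fin n → M} (hy : LinearIndependent K y)
    {S : Submodule K M} (hS : ∀ i, y i ∈ S) : n ≤ Module.finrank K S := by
  simpa using (hy.of_comp S.subtype (v := fun i => (⟨y i, hS i⟩ : S))).fintype_card_le_finrank

/-- Let G be a k-partite k-uniform hypergraph on N vertices, p a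
d-dimensional configuration, and ω an edge weight in the left kernel of the Jacobian
of the d-dimensional rigidity map. Then each vector y_j (equal to the first coordinate
p_{v,1} on the class V_j and 0 elsewhere) lies in the kernel of the first coordinated
adjacency matrix A_ω^1; in particular, if the y_j are linearly independent then the
common kernel of all such A_ω^1 has dimension at least k. -/
theorem stmt_8 {F : Type*} [Field F] {k d : ℕ} (hd : 0 < d)
    (V E : Type*) [Fintype V] [Fintype E] [DecidableEq V]
    (part : V → Fin k) (edge : E → Finset V)
    (huniform : ∀ (e : E) (i : Fin k), ∃! v, v ∈ edge e ∧ part v = i)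
    (p : V → Fin d → F)
    (A : (E → F) → Matrix V V F)
    (hA : ∀ ω u w, A ω u w = if u = w then 0 else
      ∑ e ∈ Finset.univ.filter (fun e => u ∈ edge e ∧ w ∈ edge e),
        ω e * ∏ v ∈ ((edge e).erase u).erase w, p v ⟨0, hd⟩)
    (y : Fin k → V → F)
    (hy : ∀ j v, y j v = if part v = j then p v ⟨0, hd⟩ else 0)
    (LK : (E → F) → Prop)
    (hLK : ∀ ω, LK ω ↔ ∀ (u : V) (c : Fin d),
      ∑ e ∈ Finset.univ.filter (fun e => u ∈ edge e),
        ω e * ∏ w ∈ (edge e).erase u, p w c = 0) :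
    (∀ ω, LK ω → ∀ j, (A ω).mulVec (y j) = 0) ∧
      (LinearIndependent F y →
        (k : ℕ) ≤ Module.finrank F
          ↥(⨅ ω ∈ {ω : E → F | LK ω}, LinearMap.ker (Matrix.mulVecLin (A ω)))) := by
  have hA' : A = coordAdjMatrix edge (p · ⟨0, hd⟩) := funext fun ω => funext₂ (hA ω)
  have hy' : ∀ j, y j = fun v => if part v = j then p v ⟨0, hd⟩ else 0 := fun j => funext (hy j)
  have hpart : ∀ e j, #((edge e).filter (part · = j)) = 1 := fun e j => by
    simpa [card_eq_one_iff_existsUnique] using huniform e j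
  have hker : ∀ ω, LK ω → ∀ j, (A ω).mulVec (y j) = 0 := fun ω hω j => by
    rw [hA', hy']
    exact coordAdjMatrix_mulVec_ite_eq_zero edge _ ω part j (hpart · j) ((hLK ω).mp hω · _)
  refine ⟨hker, fun hli => hli.card_le_finrank_of_forall_mem fun j => ?_⟩
  simp only [Submodule.mem_iInf, LinearMap.mem_ker, mulVecLin_apply]
  exact fun ω hω => hker ω hω j
end

section
/- Let G_0 ⊆ K be a k-partite k-graph on N vertices with rank(I_{G_0}) = |E(G_0)| = N-(k-1), and let {ω_e} be a canonical cycle basis with respect to G_0 (with ω_e = 0 for e ∈ E(G_0)). Then for any G with G_0 ⊆ G ⊆ K, the linear span of the images of the adjacency matrices A_{ω_e} over e ∈ E(G) equals the linear span of the images of A_ω over all ω ∈ ker I_G. In particular, if this span has dimension N-k, then the common kernel ∩_{ω ∈ ker I_G} ker A_ω has dimension k. -/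
/-!
A cycle `ω` of `G` is a combination of the canonical cycles: `ω - ∑ (ω e / ω_e e) • ω_e`, summed
over `e ∈ E(G) \ E(G₀)`, is a cycle supported on `E(G₀)`, hence zero because the columns of
`I_{G₀}` are independent. Since `ω ↦ A_ω` is linear, the images of the `A_ω` are spanned by those of
the `A_{ω_e}`. Each `A_ω` is symmetric, so the common kernel is the orthogonal complement of that
span for the dot product.
-/

open Matrix

theorem Matrix.eq_zero_of_mulVec_eq_zero_of_support_subset {R m n : Type*} [CommRing R]
    [Fintype n] {M : Matrix m n R} {s : Finset n}
    (hs : LinearIndependent R fun j : s => fun i => M i j) {x : n → R}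
    (hx : M *ᵥ x = 0) (hsupp : ∀ j ∉ s, x j = 0) : x = 0 := by
  have hsum : ∑ j : s, x j • (fun i => M i j) = 0 := by
    rw [Finset.sum_coe_sort s fun j => x j • fun i => M i j, ← hx,
      Finset.sum_subset (Finset.subset_univ s) fun j _ hj => by simp [hsupp j hj]]
    ext i
    simp [Matrix.mulVec, dotProduct, mul_comm]
  funext j
  by_cases hj : j ∈ s
  · exact Fintype.linearIndependent_iff.mp hs (fun j => x j) hsum ⟨j, hj⟩
  · exact hsupp j hj

section CanonicalBasis

/- `Z` plays the cycle space `ker I`, `s₀` the edge set of `G₀`, and `b e` the canonical cycle of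
the edge `e`. -/

variable {F ι : Type*} [Field F] [DecidableEq ι] {Z : Submodule F (ι → F)} {s₀ : Finset ι}
  (hZ : ∀ x ∈ Z, (∀ j ∉ s₀, x j = 0) → x = 0) {b : ι → ι → F}
  (hbZ : ∀ e ∉ s₀, b e ∈ Z) (hbsupp : ∀ e ∉ s₀, ∀ f ∉ s₀, f ≠ e → b e f = 0)
include hZ hbZ hbsupp

theorem apply_self_ne_zero_of_canonical {e : ι} (he : e ∉ s₀) (hbe : b e ≠ 0) : b e e ≠ 0 := by
  refine fun hee => hbe (hZ _ (hbZ e he) fun f hf => ?_)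
  by_cases hfe : f = e
  · rwa [hfe]
  · exact hbsupp e he f hf hfe

theorem eq_sum_of_canonical (hbne : ∀ e ∉ s₀, b e ≠ 0) {t : Finset ι} {x : ι → F}
    (hx : x ∈ Z) (hxt : ∀ f ∉ t, x f = 0) :
    x = ∑ e ∈ t \ s₀, (x e / b e e) • b e := by
  have hdiag (e) (he : e ∉ s₀) := apply_self_ne_zero_of_canonical hZ hbZ hbsupp he (hbne e he)
  set y := ∑ e ∈ t \ s₀, (x e / b e e) • b e
  have hy : y ∈ Z := Z.sum_mem fun e he => Z.smul_mem _ (hbZ e (Finset.mem_sdiff.mp he).2)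
  have hyf : ∀ f ∉ s₀, y f = if f ∈ t then x f else 0 := by
    intro f hf
    simp only [y, Finset.sum_apply, Pi.smul_apply, smul_eq_mul]
    split_ifs with hft
    · rw [Finset.sum_eq_single_of_mem f (Finset.mem_sdiff.mpr ⟨hft, hf⟩)
        fun e he hef => by rw [hbsupp e (Finset.mem_sdiff.mp he).2 f hf hef.symm, mul_zero]]
      exact div_mul_cancel₀ _ (hdiag f hf)
    · exact Finset.sum_eq_zero fun e he => by
        rw [hbsupp e (Finset.mem_sdiff.mp he).2 f hf
          (fun h => hft (h ▸ (Finset.mem_sdiff.mp he).1)), mul_zero]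
  refine sub_eq_zero.mp (hZ _ (Z.sub_mem hx hy) fun f hf => ?_)
  rw [Pi.sub_apply, hyf f hf]
  split_ifs with hft
  · exact sub_self _
  · rw [hxt f hft, sub_zero]

theorem mem_span_image_of_canonical (hbne : ∀ e ∉ s₀, b e ≠ 0) {t : Finset ι} {x : ι → F}
    (hx : x ∈ Z) (hxt : ∀ f ∉ t, x f = 0) : x ∈ Submodule.span F (b '' t) := by
  rw [eq_sum_of_canonical hZ hbZ hbsupp hbne hx hxt]
  exact Submodule.sum_mem _ fun e he => Submodule.smul_mem _ _
    (Submodule.subset_span ⟨e, (Finset.mem_sdiff.mp he).1, rfl⟩)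

end CanonicalBasis

section Ranges

variable {R M m n ι : Type*} [CommSemiring R] [AddCommMonoid M] [Module R M] [Fintype n]
  {A : M → Matrix m n R}

theorem Matrix.range_mulVecLin_le_iSup_of_mem_span (hA : IsLinearMap R A) {b : ι → M}
    {s : Set ι} {x : M} (hx : x ∈ Submodule.span R (b '' s)) :
    LinearMap.range (A x).mulVecLin ≤ ⨆ i ∈ s, LinearMap.range (A (b i)).mulVecLin := by
  induction hx using Submodule.span_induction with
  | mem y hy =>
    obtain ⟨i, hi, rfl⟩ := hy
    exact le_iSup₂_of_le i hi le_rfl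
  | zero => simp [hA.map_zero]
  | add y z _ _ hy hz =>
    rw [hA.map_add, Matrix.mulVecLin_add]
    exact (LinearMap.range_add_le _ _).trans (sup_le hy hz)
  | smul c y _ hy =>
    rw [hA.map_smul, show (c • A y).mulVecLin = c • (A y).mulVecLin from
      map_smul (mulVecBilin R R) c (A y)]
    exact (LinearMap.range_smul_le_range _ c).trans hy

theorem Matrix.iSup_range_mulVecLin_eq_of_subset_span (hA : IsLinearMap R A) {b : ι → M}
    {s : Set ι} {S : Set M} (hbS : b '' s ⊆ S) (hS : S ⊆ Submodule.span R (b '' s)) :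
    ⨆ i ∈ s, LinearMap.range (A (b i)).mulVecLin = ⨆ x ∈ S, LinearMap.range (A x).mulVecLin :=
  le_antisymm (iSup₂_le fun i hi => le_iSup₂_of_le (b i) (hbS ⟨i, hi, rfl⟩) le_rfl)
    (iSup₂_le fun _ hx => range_mulVecLin_le_iSup_of_mem_span hA (hS hx))

end Ranges

section Adjacency

variable {R V ι : Type*} [CommSemiring R] [DecidableEq V] {A : (ι → R) → Matrix V V R}
  {s : V → V → Finset ι}

theorem isLinearMap_of_apply_eq_ite_sum
    (hA : ∀ ω u w, A ω u w = if u = w then 0 else ∑ e ∈ s u w, ω e) : IsLinearMap R A := by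
  constructor
  · intro ω ω'
    ext u w
    simp only [hA, Matrix.add_apply, Pi.add_apply, Finset.sum_add_distrib]
    split_ifs <;> simp
  · intro c ω
    ext u w
    simp only [hA, Matrix.smul_apply, Pi.smul_apply, smul_eq_mul, ← Finset.mul_sum]
    split_ifs <;> simp

theorem isSymm_of_apply_eq_ite_sum
    (hA : ∀ ω u w, A ω u w = if u = w then 0 else ∑ e ∈ s u w, ω e)
    (hs : ∀ u w, s u w = s w u) (ω : ι → R) : (A ω).IsSymm := by
  ext u w
  simp only [Matrix.transpose_apply, hA, hs w u, eq_comm]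

end Adjacency

section CommonKernel

variable {R F n α : Type*} [CommSemiring R] [Field F] [Fintype n]

theorem Matrix.IsSymm.mulVec_dotProduct {N : Matrix n n R} (hN : N.IsSymm) (x y : n → R) :
    N *ᵥ y ⬝ᵥ x = y ⬝ᵥ N *ᵥ x := by
  rw [dotProduct_comm, dotProduct_mulVec, ← mulVec_transpose, hN.eq, dotProduct_comm]

theorem Matrix.IsSymm.mulVec_eq_zero_iff_range_le_ker {N : Matrix n n R} (hN : N.IsSymm)
    (x : n → R) :
    N *ᵥ x = 0 ↔ LinearMap.range N.mulVecLin ≤ LinearMap.ker ((dotProductBilin R R).flip x) := by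
  simp only [LinearMap.range_le_ker_iff, LinearMap.ext_iff, LinearMap.comp_apply,
    LinearMap.flip_apply, dotProductBilin_apply_apply, mulVecLin_apply, hN.mulVec_dotProduct,
    LinearMap.zero_apply]
  rw [← dotProduct_eq_zero_iff]
  simp only [dotProduct_comm _ (N *ᵥ x)]

theorem dotProductBilin_nondegenerate :
    (dotProductBilin R R : LinearMap.BilinForm R (n → R)).Nondegenerate :=
  ⟨fun _ hx => dotProduct_eq_zero_iff.mp hx,
    fun _ hx => dotProduct_eq_zero_iff.mp fun y => (dotProduct_comm _ y).trans (hx y)⟩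

theorem Matrix.iInf_ker_mulVecLin_eq_orthogonal {M : α → Matrix n n F} (hM : ∀ a, (M a).IsSymm)
    (S : Set α) :
    ⨅ a ∈ S, LinearMap.ker (M a).mulVecLin =
      LinearMap.BilinForm.orthogonal (dotProductBilin F F)
        (⨆ a ∈ S, LinearMap.range (M a).mulVecLin) := by
  ext x
  simp only [Submodule.mem_iInf, LinearMap.mem_ker, mulVecLin_apply,
    fun a => (hM a).mulVec_eq_zero_iff_range_le_ker x, ← iSup₂_le_iff]
  rfl

theorem Matrix.finrank_iInf_ker_mulVecLin {M : α → Matrix n n F} (hM : ∀ a, (M a).IsSymm)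
    (S : Set α) :
    Module.finrank F ↥(⨅ a ∈ S, LinearMap.ker (M a).mulVecLin) =
      Fintype.card n - Module.finrank F ↥(⨆ a ∈ S, LinearMap.range (M a).mulVecLin) := by
  rw [iInf_ker_mulVecLin_eq_orthogonal hM,
    LinearMap.BilinForm.finrank_orthogonal dotProductBilin_nondegenerate, Module.finrank_pi]

end CommonKernel

theorem stmt_10_general {k : ℕ} (F : Type*) [Field F] (V EK : Type*)
    [Fintype V] [Fintype EK] [DecidableEq V] [DecidableEq EK]
    (part : V → Fin k) (hpart : Function.Surjective part)
    (edge : EK → Finset V)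
    (I : Matrix V EK F)
    (E0 : Finset EK)
    (hE0indep : LinearIndependent F (fun (f : ↥E0) => (fun v => I v (f : EK))))
    (ωc : EK → EK → F)
    (hωc0 : ∀ e ∈ E0, ωc e = 0)
    (hωcne : ∀ e ∉ E0, ωc e ≠ 0)
    (hωcsupp : ∀ e ∉ E0, ∀ f : EK, f ∉ E0 → f ≠ e → ωc e f = 0)
    (hωcker : ∀ e ∉ E0, I.mulVec (ωc e) = 0)
    (A : (EK → F) → Matrix V V F)
    (hA : ∀ ω u w, A ω u w = if u = w then 0 else
      ∑ e ∈ Finset.univ.filter (fun e => u ∈ edge e ∧ w ∈ edge e), ω e)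
    (EG : Finset EK) (hE0G : E0 ⊆ EG) :
    (⨆ e ∈ EG, LinearMap.range (Matrix.mulVecLin (A (ωc e))))
        = (⨆ ω ∈ {ω : EK → F | (∀ f ∉ EG, ω f = 0) ∧ I.mulVec ω = 0},
            LinearMap.range (Matrix.mulVecLin (A ω))) ∧
      (Module.finrank F ↥(⨆ e ∈ EG, LinearMap.range (Matrix.mulVecLin (A (ωc e))))
          = Fintype.card V - k →
        Module.finrank F ↥(⨅ ω ∈ {ω : EK → F | (∀ f ∉ EG, ω f = 0) ∧ I.mulVec ω = 0},
            LinearMap.ker (Matrix.mulVecLin (A ω))) = k) := by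
  have hlin := isLinearMap_of_apply_eq_ite_sum hA
  have hsymm := isSymm_of_apply_eq_ite_sum hA fun u w => by simp only [and_comm]
  have hZ : ∀ x ∈ LinearMap.ker I.mulVecLin, (∀ f ∉ E0, x f = 0) → x = 0 :=
    fun _ hx => I.eq_zero_of_mulVec_eq_zero_of_support_subset hE0indep hx
  have hcycles : ωc '' ↑EG ⊆ {ω : EK → F | (∀ f ∉ EG, ω f = 0) ∧ I.mulVec ω = 0} := by
    rintro _ ⟨e, he, rfl⟩
    by_cases he0 : e ∈ E0
    · exact ⟨fun f _ => by rw [hωc0 e he0, Pi.zero_apply], by rw [hωc0 e he0, mulVec_zero]⟩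
    · exact ⟨fun f hf => hωcsupp e he0 f (fun h => hf (hE0G h)) fun h => hf (h ▸ he),
        hωcker e he0⟩
  have hspan := Matrix.iSup_range_mulVecLin_eq_of_subset_span hlin hcycles
    fun ω ⟨hsupp, hker⟩ => mem_span_image_of_canonical hZ hωcker hωcsupp hωcne hker hsupp
  simp only [Finset.mem_coe] at hspan
  refine ⟨hspan, fun hdim => ?_⟩
  have hk : k ≤ Fintype.card V := by simpa using Fintype.card_le_of_surjective part hpart
  rw [Matrix.finrank_iInf_ker_mulVecLin hsymm, ← hspan, hdim]
  omega

/-- Let K be the complete k-partite k-uniform hypergraph on N vertices,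
G_0 ⊆ K with rank(I_{G_0}) = |E(G_0)| = N-(k-1), and {ω_e} a canonical cycle basis with
respect to G_0 (ω_e = 0 for e ∈ E(G_0)).  For a hypergraph G with G_0 ⊆ G ⊆ K (edge
set EG), the span of the images of the adjacency matrices A_{ω_e} over e ∈ EG equals
the span of the images of A_ω over all ω ∈ ker I_G; in particular, if this span has
dimension N-k then the common kernel ∩_{ω ∈ ker I_G} ker A_ω has dimension k. -/
theorem stmt_10 {k : ℕ} (F : Type*) [Field F] (V EK : Type*)
    [Fintype V] [Fintype EK] [DecidableEq V] [DecidableEq EK]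
    (part : V → Fin k) (hpart : Function.Surjective part)
    (edge : EK → Finset V)
    (huniform : ∀ (e : EK) (i : Fin k), ∃! v, v ∈ edge e ∧ part v = i)
    (hcomplete : ∀ S : Finset V, (∀ i : Fin k, ∃! v, v ∈ S ∧ part v = i) →
      ∃! e : EK, edge e = S)
    (I : Matrix V EK F) (hI : ∀ v e, I v e = if v ∈ edge e then 1 else 0)
    (E0 : Finset EK)
    (hE0indep : LinearIndependent F (fun (f : ↥E0) => (fun v => I v (f : EK))))
    (hE0card : E0.card = Fintype.card V - (k - 1))
    (ωc : EK → EK → F)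
    (hωc0 : ∀ e ∈ E0, ωc e = 0)
    (hωcne : ∀ e ∉ E0, ωc e ≠ 0)
    (hωcsupp : ∀ e ∉ E0, ∀ f : EK, f ∉ E0 → f ≠ e → ωc e f = 0)
    (hωcker : ∀ e ∉ E0, I.mulVec (ωc e) = 0)
    (A : (EK → F) → Matrix V V F)
    (hA : ∀ ω u w, A ω u w = if u = w then 0 else
      ∑ e ∈ Finset.univ.filter (fun e => u ∈ edge e ∧ w ∈ edge e), ω e)
    (EG : Finset EK) (hE0G : E0 ⊆ EG) :
    (⨆ e ∈ EG, LinearMap.range (Matrix.mulVecLin (A (ωc e))))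
        = (⨆ ω ∈ {ω : EK → F | (∀ f ∉ EG, ω f = 0) ∧ I.mulVec ω = 0},
            LinearMap.range (Matrix.mulVecLin (A ω))) ∧
      (Module.finrank F ↥(⨆ e ∈ EG, LinearMap.range (Matrix.mulVecLin (A (ωc e))))
          = Fintype.card V - k →
        Module.finrank F ↥(⨅ ω ∈ {ω : EK → F | (∀ f ∉ EG, ω f = 0) ∧ I.mulVec ω = 0},
            LinearMap.ker (Matrix.mulVecLin (A ω))) = k) :=
  stmt_10_general F V EK part hpart edge I E0 hE0indep ωc hωc0 hωcne hωcsupp hωcker A hA EG hE0G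
end

section
/- For the complete k-partite k-graph K with classes V_1 = {v_{1,1}, v_{1,2}}, V_2 = {v_{2,1}, v_{2,2}}, and singleton classes V_3,...,V_k, the edge weight ω assigning +1 to edges (v_{1,1},v_{2,1},v_3,...,v_k) and (v_{1,2},v_{2,2},v_3,...,v_k) and -1 to the other two edges lies in the kernel of the incidence matrix, and the corresponding adjacency matrix A_ω has rank 2 = N - k (where N = k+2). -/
/-- The vertex set of K_{(2,2,1,...,1)}^k: two classes of size 2 and k-2 singleton
classes; N = k+2 vertices (for k ≥ 2). -/
abbrev KVert (k : ℕ) := Fin 2 ⊕ Fin 2 ⊕ Fin (k - 2)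

/-- The edges of K_{(2,2,1,...,1)}^k, indexed by the choice of a vertex in each of the
two classes of size 2; the edge contains those two vertices and all singleton-class
vertices. -/
def KEdge (k : ℕ) (ab : Fin 2 × Fin 2) : Finset (KVert k) :=
  insert (Sum.inl ab.1) (insert (Sum.inr (Sum.inl ab.2))
    (Finset.univ.image fun j : Fin (k - 2) => Sum.inr (Sum.inr j)))

/-!
The weight is a product: `ω (a, b) = s a * s b` with `s = ![1, -1]`, and `s` sums to zero.
Summing `ω` over the edges through two vertices `u, w` therefore kills every term in which one
of the two coordinates of the edge is free, leaving `f u * g w + g u * f w`, where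
`f = firstClassSign` and `g = secondClassSign` are `s` placed on the two classes of size two.
For `u = w` this is the `u`-th entry of `I ω`, which vanishes because `f` and `g` have disjoint
supports; for `u ≠ w` it shows `A_ω = f gᵀ + g fᵀ`, of rank at most two. The minor on the rows
and columns `v_{1,1}, v_{2,1}` is `!![0, 1; 1, 0]`, so the rank is exactly two.
-/

open Matrix Finset

namespace Matrix

variable {m n R : Type*}

theorem rank_vecMulVec_add_vecMulVec_le [CommSemiring R] [StrongRankCondition R] [Fintype n]
    (a c : m → R) (b d : n → R) : (vecMulVec a b + vecMulVec c d).rank ≤ 2 := by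
  have hfactor : vecMulVec a b + vecMulVec c d = (of ![a, c])ᵀ * of ![b, d] := by
    ext i j
    simp [vecMulVec_apply, mul_apply, Fin.sum_univ_two]
  rw [hfactor]
  exact (rank_mul_le_left _ _).trans ((rank_le_card_width _).trans_eq (Fintype.card_fin 2))

theorem card_le_rank_of_det_submatrix_ne_zero [CommRing R] [IsDomain R] [Fintype n]
    {ι : Type*} [Fintype ι] [DecidableEq ι] (A : Matrix m n R) (r : ι → m) (c : ι → n)
    (h : (A.submatrix r c).det ≠ 0) : Fintype.card ι ≤ A.rank :=
  (rank_of_det_ne_zero h).symm.trans_le (rank_submatrix_le A r c)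

end Matrix

section

variable {k : ℕ} {R : Type*}

@[simp] lemma inl_mem_kEdge (a : Fin 2) (ab : Fin 2 × Fin 2) :
    (Sum.inl a : KVert k) ∈ KEdge k ab ↔ a = ab.1 := by
  simp [KEdge]

@[simp] lemma inr_inl_mem_kEdge (b : Fin 2) (ab : Fin 2 × Fin 2) :
    (Sum.inr (Sum.inl b) : KVert k) ∈ KEdge k ab ↔ b = ab.2 := by
  simp [KEdge]

@[simp] lemma inr_inr_mem_kEdge (j : Fin (k - 2)) (ab : Fin 2 × Fin 2) :
    (Sum.inr (Sum.inr j) : KVert k) ∈ KEdge k ab := by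
  simp [KEdge]

variable [Ring R]

variable (k) in
def firstClassSign : KVert k → R := Sum.elim ![1, -1] 0

variable (k) in
def secondClassSign : KVert k → R := Sum.elim 0 (Sum.elim ![1, -1] 0)

lemma firstClassSign_mul_secondClassSign (v : KVert k) :
    (firstClassSign k v * secondClassSign k v : R) = 0 := by
  rcases v with a | b | j <;> simp [firstClassSign, secondClassSign]

lemma secondClassSign_mul_firstClassSign (v : KVert k) :
    (secondClassSign k v * firstClassSign k v : R) = 0 := by
  rcases v with a | b | j <;> simp [firstClassSign, secondClassSign]

lemma sum_kEdge_sign (u w : KVert k) :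
    ∑ e ∈ univ.filter (fun e => u ∈ KEdge k e ∧ w ∈ KEdge k e),
        (if e.1 = e.2 then 1 else -1 : R) =
      firstClassSign k u * secondClassSign k w + secondClassSign k u * firstClassSign k w := by
  revert u w
  simp [Sum.forall, Fin.forall_fin_two, sum_filter, Fintype.sum_prod_type, Fin.sum_univ_two,
    firstClassSign, secondClassSign]

lemma sum_kEdge_sign_self (v : KVert k) :
    ∑ e ∈ univ.filter (fun e => v ∈ KEdge k e), (if e.1 = e.2 then 1 else -1 : R) = 0 := by
  simpa [firstClassSign_mul_secondClassSign, secondClassSign_mul_firstClassSign]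
    using sum_kEdge_sign (R := R) v v

end

lemma rank_vecMulVec_classSign (k : ℕ) (R : Type*) [CommRing R] [IsDomain R] :
    (vecMulVec (firstClassSign k) (secondClassSign k) +
      vecMulVec (secondClassSign k) (firstClassSign k) :
        Matrix (KVert k) (KVert k) R).rank = 2 := by
  refine le_antisymm (rank_vecMulVec_add_vecMulVec_le _ _ _ _) ?_
  have hminor := card_le_rank_of_det_submatrix_ne_zero
    (vecMulVec (firstClassSign k) (secondClassSign k) +
      vecMulVec (secondClassSign k) (firstClassSign k) : Matrix (KVert k) (KVert k) R)
    ![Sum.inl 0, Sum.inr (Sum.inl 0)] ![Sum.inl 0, Sum.inr (Sum.inl 0)]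
    (by rw [det_fin_two]; simp [vecMulVec_apply, firstClassSign, secondClassSign])
  rwa [Fintype.card_fin] at hminor

theorem stmt_12_general (F : Type*) [Field F] (k : ℕ) (hk : 2 ≤ k) :
    let ω : Fin 2 × Fin 2 → F := fun ab => if ab.1 = ab.2 then 1 else -1
    let I : Matrix (KVert k) (Fin 2 × Fin 2) F :=
      Matrix.of fun v e => if v ∈ KEdge k e then 1 else 0
    let A : Matrix (KVert k) (KVert k) F :=
      Matrix.of fun u w => if u = w then 0 else
        ∑ e ∈ Finset.univ.filter (fun e => u ∈ KEdge k e ∧ w ∈ KEdge k e), ω e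
    I.mulVec ω = 0 ∧ A.rank = 2 ∧ Fintype.card (KVert k) = k + 2 := by
  intro ω I A
  have hA : A = vecMulVec (firstClassSign k) (secondClassSign k) +
      vecMulVec (secondClassSign k) (firstClassSign k) := by
    ext u w
    by_cases huw : u = w
    · subst huw
      simp [A, vecMulVec_apply, firstClassSign_mul_secondClassSign,
        secondClassSign_mul_firstClassSign]
    · simp [A, huw, ω, sum_kEdge_sign, vecMulVec_apply]
  refine ⟨?_, hA ▸ rank_vecMulVec_classSign k F, ?_⟩
  · ext v
    simpa only [I, ω, mulVec, dotProduct, of_apply, ite_mul, one_mul, zero_mul, ← sum_filter,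
      Pi.zero_apply] using sum_kEdge_sign_self v
  · simp only [Fintype.card_sum, Fintype.card_fin]
    omega

/-- For K_{(2,2,1,...,1)}^k, the edge weight ω assigning +1 to the edges
(v_{1,1},v_{2,1},v_3,...,v_k) and (v_{1,2},v_{2,2},v_3,...,v_k) and -1 to the other
two edges lies in the kernel of the incidence matrix, and the corresponding adjacency
matrix A_ω has rank 2 = N - k, where N = k + 2. -/
theorem stmt_12 (F : Type*) [Field F] [CharZero F] (k : ℕ) (hk : 2 ≤ k) :
    let ω : Fin 2 × Fin 2 → F := fun ab => if ab.1 = ab.2 then 1 else -1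
    let I : Matrix (KVert k) (Fin 2 × Fin 2) F :=
      Matrix.of fun v e => if v ∈ KEdge k e then 1 else 0
    let A : Matrix (KVert k) (KVert k) F :=
      Matrix.of fun u w => if u = w then 0 else
        ∑ e ∈ Finset.univ.filter (fun e => u ∈ KEdge k e ∧ w ∈ KEdge k e), ω e
    I.mulVec ω = 0 ∧ A.rank = 2 ∧ Fintype.card (KVert k) = k + 2 :=
  stmt_12_general F k hk
end

section
/- Let Δ be a collection of subsets of V_1 ∪ ... ∪ V_k with |V_i| = n, and for I ⊆ {1,...,k} with |I| = i, let Δ_I^{(t)} be defined recursively as in the contact-family construction. Fix 0 < t < 1 and constants δ_k, with δ_i = k·δ_{i+1}/t for i < k. If |Δ_{{1,...,k}}^{(t)}| ≥ (1-δ_k)n^k and δ_0 < 1, then for every I ⊆ {1,...,k}, |Δ_I^{(t)}| ≥ (1 - δ_{|I|}) n^{|I|}. -/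
/-!
Call `f` *poorly extendable* in direction `j` if fewer than `(1 - t)|α|` of the
functions `update f j v` lie in `D`. Double counting the pairs `(f, v)` with
`update f j v ∉ D` shows that at most `|Dᶜ| / t` functions are poorly extendable. A function
outside `Δ I` is poorly extendable into `Δ (insert j I)` for some `j ∉ I`, so a union bound
over the at most `k` such directions gives `|(Δ I)ᶜ| ≤ k δ_{|I|+1} n^k / t = δ_{|I|} n^k`,
and the theorem follows by downward induction on `I`.
-/

open Finset Function Fintype

variable {ι α : Type*} [Fintype ι] [DecidableEq ι] [Fintype α] [DecidableEq α]

theorem sum_card_filter_update_mem (j : ι) (C : Finset (ι → α)) :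
    ∑ f, #{v | update f j v ∈ C} = #C * card α := by
  let e : (ι → α) × α ≃ (ι → α) × α :=
    { toFun p := (update p.1 j p.2, p.1 j)
      invFun p := (update p.1 j p.2, p.1 j)
      left_inv p := by simp
      right_inv p := by simp }
  calc ∑ f, #{v | update f j v ∈ C}
      = #{p : (ι → α) × α | update p.1 j p.2 ∈ C} := by
        simp only [card_filter, ← univ_product_univ, sum_product]
    _ = #(C ×ˢ (univ : Finset α)) := card_equiv e (by simp [e])
    _ = #C * card α := by simp

noncomputable def poorlyExtendable (D : Finset (ι → α)) (j : ι) (t : ℝ) : Finset (ι → α) :=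
  {f | (#{v | update f j v ∈ D} : ℝ) < (1 - t) * card α}

theorem mul_card_poorlyExtendable_le [Nonempty α] (D : Finset (ι → α)) (j : ι) (t : ℝ) :
    t * #(poorlyExtendable D j t) ≤ #Dᶜ := by
  have hfiber : ∀ f ∈ poorlyExtendable D j t,
      t * card α ≤ (#{v | update f j v ∈ Dᶜ} : ℝ) := by
    intro f hf
    have hsplit := card_filter_add_card_filter_not (s := univ) fun v => update f j v ∈ D
    simp only [poorlyExtendable, mem_filter, mem_univ, true_and] at hf
    simp only [mem_compl, card_univ] at hsplit ⊢
    have : (#{v | update f j v ∈ D} : ℝ) + #{v | update f j v ∉ D} = card α := by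
      exact_mod_cast hsplit
    linarith
  refine le_of_mul_le_mul_right ?_ (Nat.cast_pos.mpr card_pos : (0 : ℝ) < card α)
  calc t * #(poorlyExtendable D j t) * card α
      = ∑ _f ∈ poorlyExtendable D j t, t * (card α : ℝ) := by simp [sum_const]; ring
    _ ≤ ∑ f ∈ poorlyExtendable D j t, (#{v | update f j v ∈ Dᶜ} : ℝ) := sum_le_sum hfiber
    _ ≤ ∑ f, (#{v | update f j v ∈ Dᶜ} : ℝ) :=
        sum_le_sum_of_subset_of_nonneg (subset_univ _) fun _ _ _ => by positivity
    _ = #Dᶜ * card α := by exact_mod_cast sum_card_filter_update_mem j Dᶜ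

theorem mul_card_compl_le_of_mem_iff_forall_extensions [Nonempty α] {I : Finset ι}
    (hI : I ≠ univ) {D : Finset (ι → α)} {E : ι → Finset (ι → α)} {t c : ℝ} (ht : 0 ≤ t)
    (hD : ∀ f, f ∈ D ↔ ∀ j ∉ I, (1 - t) * card α ≤ (#{v | update f j v ∈ E j} : ℝ))
    (hE : ∀ j ∉ I, (#(E j)ᶜ : ℝ) ≤ c) :
    t * #Dᶜ ≤ card ι * c := by
  have hcover : Dᶜ ⊆ Iᶜ.biUnion fun j => poorlyExtendable (E j) j t := by
    intro f hf
    simpa [hD, poorlyExtendable] using hf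
  obtain ⟨j₀, hj₀⟩ : ∃ j, j ∉ I := by simpa [eq_univ_iff_forall] using hI
  have hc : 0 ≤ c := (Nat.cast_nonneg _).trans (hE j₀ hj₀)
  calc t * #Dᶜ
      ≤ t * ∑ j ∈ Iᶜ, (#(poorlyExtendable (E j) j t) : ℝ) := by
        gcongr
        exact_mod_cast (card_le_card hcover).trans card_biUnion_le
    _ = ∑ j ∈ Iᶜ, t * #(poorlyExtendable (E j) j t) := mul_sum _ _ _
    _ ≤ ∑ _j ∈ Iᶜ, c := sum_le_sum fun j hj =>
        (mul_card_poorlyExtendable_le _ j t).trans (hE j (mem_compl.mp hj))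
    _ = #Iᶜ * c := by simp
    _ ≤ card ι * c := by gcongr; exact_mod_cast card_le_univ _

theorem card_compl_le_of_mem_iff_forall_extensions [Nonempty α]
    (Δ : Finset ι → Finset (ι → α)) {t : ℝ} (ht : 0 < t) {δ : ℕ → ℝ}
    (hδ : ∀ i < card ι, δ i = card ι * δ (i + 1) / t)
    (hbase : (#(Δ univ)ᶜ : ℝ) ≤ δ (card ι) * card α ^ card ι)
    (hrec : ∀ I ≠ univ, ∀ f, f ∈ Δ I ↔
      ∀ j ∉ I, (1 - t) * card α ≤ (#{v | update f j v ∈ Δ (insert j I)} : ℝ))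
    (I : Finset ι) :
    (#(Δ I)ᶜ : ℝ) ≤ δ #I * card α ^ card ι := by
  refine strongDownwardInduction (p := fun I => (#(Δ I)ᶜ : ℝ) ≤ δ #I * card α ^ card ι)
    (n := card ι) (fun I ih _ => ?_) I (card_le_univ I)
  by_cases hI : I = univ
  · subst hI
    simpa using hbase
  have hstep := mul_card_compl_le_of_mem_iff_forall_extensions hI ht.le (hrec I hI)
    (c := δ (#I + 1) * card α ^ card ι) fun j hj => by
      simpa [card_insert_of_notMem hj] using ih (card_le_univ _) (ssubset_insert hj)
  rw [hδ _ ((card_lt_iff_ne_univ I).mpr hI), div_mul_eq_mul_div, le_div_iff₀ ht]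
  linarith

theorem stmt_15_general {k n : ℕ} (hn : 0 < n)
    (Δ : Finset (Fin k) → Finset (Fin k → Fin n))
    (t : ℝ) (ht0 : 0 < t)
    (δ : ℕ → ℝ)
    (hδ : ∀ i < k, δ i = k * δ (i + 1) / t)
    (hbase : ((1 : ℝ) - δ k) * (n : ℝ) ^ k ≤ ((Δ Finset.univ).card : ℝ))
    (hrec : ∀ I : Finset (Fin k), I ≠ Finset.univ → ∀ f : Fin k → Fin n,
      (f ∈ Δ I ↔ ∀ j ∉ I, ((1 : ℝ) - t) * n ≤
        ((Finset.univ.filter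
          (fun v : Fin n => Function.update f j v ∈ Δ (insert j I))).card : ℝ))) :
    ∀ I : Finset (Fin k), ((1 : ℝ) - δ I.card) * (n : ℝ) ^ k ≤ ((Δ I).card : ℝ) := by
  have : Nonempty (Fin n) := Fin.pos_iff_nonempty.mp hn
  have hsplit (I : Finset (Fin k)) : (#(Δ I)ᶜ : ℝ) + #(Δ I) = n ^ k := by
    have h := card_compl_add_card (Δ I)
    rw [Fintype.card_fun, Fintype.card_fin, Fintype.card_fin] at h
    exact_mod_cast h
  have hbase' : (#(Δ univ)ᶜ : ℝ) ≤ δ k * n ^ k := by linarith [hsplit univ]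
  have hbound := card_compl_le_of_mem_iff_forall_extensions Δ ht0 (δ := δ)
    (by simpa using hδ) (by simpa using hbase') (by simpa using hrec)
  intro I
  have := hbound I
  simp only [Fintype.card_fin] at this
  linarith [hsplit I]

/-- counting lemma for the contact-family construction. Partial
transversals on I ⊆ {1,...,k} are encoded as total functions Fin k → Fin n whose
membership in Δ I depends only on the values on I; then |Δ_I^{(t)}| ≥ (1-δ_{|I|})n^{|I|}
translates to (1 - δ |I|)·n^k ≤ |Δ I| (each partial transversal corresponding to
n^{k-|I|} total functions). Δ univ is given; for I ⊊ {1,...,k}, f ∈ Δ I iff for every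
j ∉ I at least (1-t)n values v have the updated function in Δ (insert j I). If
δ_i = kδ_{i+1}/t, δ_0 < 1 and (1-δ_k)n^k ≤ |Δ univ|, then (1-δ_{|I|})n^k ≤ |Δ I| for
all I. -/
theorem stmt_15 {k n : ℕ} (hn : 0 < n)
    (Δ : Finset (Fin k) → Finset (Fin k → Fin n))
    (t : ℝ) (ht0 : 0 < t) (ht1 : t < 1)
    (δ : ℕ → ℝ)
    (hδ : ∀ i < k, δ i = k * δ (i + 1) / t)
    (hδ0 : δ 0 < 1)
    (hbase : ((1 : ℝ) - δ k) * (n : ℝ) ^ k ≤ ((Δ Finset.univ).card : ℝ))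
    (hrec : ∀ I : Finset (Fin k), I ≠ Finset.univ → ∀ f : Fin k → Fin n,
      (f ∈ Δ I ↔ ∀ j ∉ I, ((1 : ℝ) - t) * n ≤
        ((Finset.univ.filter
          (fun v : Fin n => Function.update f j v ∈ Δ (insert j I))).card : ℝ))) :
    ∀ I : Finset (Fin k), ((1 : ℝ) - δ I.card) * (n : ℝ) ^ k ≤ ((Δ I).card : ℝ) :=
  stmt_15_general hn Δ t ht0 δ hδ hbase hrec
end
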